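/- Let 0 < α < 1, t₀ < t₁, K > 0, and t_{-j} = t₁ - ((α^{-j-1} - 1)/(α^{-1} - 1))·(t₁ - t₀). Then there exists T' < 0 such that for every t ≤ T' the following holds: if j ∈ ℕ is such that t ∈ (t_{-j}, t_{-j+1}], then α^j·K ≤ (2(t₁ - t₀)·K)/((1 - α)·|t|). -/

import Mathlib

/-!
Writing `s_j = (α^{-j-1} - 1)/(α^{-1} - 1) = (α^{-j} - α)/(1 - α) ≤ α^{-j}/(1 - α)`, the
condition `t > t_{-j} = t₁ - s_j (t₁ - t₀)` gives `(1 - α) α^j (t₁ - t) < t₁ - t₀`.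
Once `t ≤ 2 t₁` we have `t₁ - t ≥ |t| / 2`, hence `(1 - α) α^j |t| < 2 (t₁ - t₀)`.
-/

lemma zpow_neg_sub_one_sub_one_div_inv_sub_one {α : ℝ} (hα0 : α ≠ 0) (k : ℤ) :
    (α ^ (-k - 1) - 1) / (α⁻¹ - 1) = (α ^ (-k) - α) / (1 - α) := by
  have hinv : α⁻¹ - 1 = (1 - α) / α := by field_simp
  rw [zpow_sub₀ hα0, zpow_one, hinv]
  field_simp

lemma geom_coeff_mul_le_one {α : ℝ} (hα0 : 0 < α) (hα1 : α < 1) (j : ℕ) :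
    (α ^ (-(j : ℤ) - 1) - 1) / (α⁻¹ - 1) * ((1 - α) * α ^ j) ≤ 1 := by
  have h1α : 0 < 1 - α := sub_pos.mpr hα1
  have hαj : 0 < α ^ j := pow_pos hα0 j
  rw [zpow_neg_sub_one_sub_one_div_inv_sub_one hα0.ne', zpow_neg, zpow_natCast]
  field_simp
  nlinarith

lemma mul_abs_le_two_mul_of_sub_mul_lt {lam c s t t₁ : ℝ} (hlam : 0 < lam) (hc : 0 ≤ c)
    (hs : s * lam ≤ 1) (ht0 : t ≤ 0) (ht : t ≤ 2 * t₁) (hlow : t₁ - s * c < t) :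
    lam * |t| ≤ 2 * c := by
  have hsc : lam * (t₁ - t) < c := by nlinarith
  rw [abs_of_nonpos ht0]
  nlinarith

/-- Type I bound at -∞: there is T' < 0 such that for all t ≤ T', if
t ∈ (t_{-j}, t_{-j+1}] then α^j K ≤ (2(t₁-t₀)K)/((1-α)|t|). -/
theorem typeI_bound_at_minus_infty (α t₀ t₁ K : ℝ)
    (hα0 : 0 < α) (hα1 : α < 1) (h01 : t₀ < t₁) (hK : 0 < K) :
    ∃ T' : ℝ, T' < 0 ∧ ∀ t : ℝ, t ≤ T' → ∀ j : ℕ,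
      t ∈ Set.Ioc (t₁ - ((α ^ (-(j : ℤ) - 1) - 1) / (α⁻¹ - 1)) * (t₁ - t₀))
          (t₁ - ((α ^ (-((j : ℤ) - 1) - 1) - 1) / (α⁻¹ - 1)) * (t₁ - t₀)) →
        α ^ j * K ≤ (2 * (t₁ - t₀) * K) / ((1 - α) * |t|) := by
  refine ⟨min (-1) (2 * t₁), (min_le_left _ _).trans_lt (by norm_num), ?_⟩
  intro t ht j hmem
  have ht1 : t ≤ -1 := ht.trans (min_le_left _ _)
  have h1α : 0 < 1 - α := sub_pos.mpr hα1
  have hscale : (1 - α) * α ^ j * |t| ≤ 2 * (t₁ - t₀) :=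
    mul_abs_le_two_mul_of_sub_mul_lt (mul_pos h1α (pow_pos hα0 j)) (sub_nonneg.mpr h01.le)
      (geom_coeff_mul_le_one hα0 hα1 j) (by linarith) (ht.trans (min_le_right _ _)) hmem.1
  rw [le_div_iff₀ (mul_pos h1α (abs_pos.mpr (by linarith)))]
  calc α ^ j * K * ((1 - α) * |t|) = (1 - α) * α ^ j * |t| * K := by ring
    _ ≤ 2 * (t₁ - t₀) * K := mul_le_mul_of_nonneg_right hscale hK.le
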